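/- arXiv:2507.09892 — 2 statements merged into one kernel-verified Lean document; each statement's English description precedes it below -/
import Mathlib

section
/- If l : List ℤ is nonempty, strictly decreasing (i.e., l.Sorted (· > ·)), and has length n, then qcost l = n*(n+1)/2 - 1. -/
/-- Cost of the paper's simple QuickSort: each call on a list of length `N ≥ 2`
costs `N`, plus the cost of recursive calls on the strict-left and strict-right
partitions of the tail around the pivot `l.head!`. -/
def qcost (l : List ℤ) : ℕ :=
  if _h : l.length ≤ 1 then 0
  else
    l.length + qcost (l.tail.filter (· < l.head!)) + qcost (l.tail.filter (· > l.head!))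
termination_by l.length
decreasing_by
  · calc (l.tail.filter (· < l.head!)).length ≤ l.tail.length := List.length_filter_le _ _
      _ < l.length := by rw [List.length_tail]; omega
  · calc (l.tail.filter (· > l.head!)).length ≤ l.tail.length := List.length_filter_le _ _
      _ < l.length := by rw [List.length_tail]; omega

theorem qcost_of_length_le_one {l : List ℤ} (h : l.length ≤ 1) : qcost l = 0 := by
  rw [qcost, dif_pos h]

theorem qcost_cons_cons (a b : ℤ) (t : List ℤ) :
    qcost (a :: b :: t) = (t.length + 2) + qcost ((b :: t).filter (· < a)) +
      qcost ((b :: t).filter (· > a)) := by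
  rw [qcost, dif_neg (by simp)]
  rfl

theorem qcost_cons_of_forall_lt {a : ℤ} {t : List ℤ} (ht : t ≠ []) (hlt : ∀ x ∈ t, x < a) :
    qcost (a :: t) = (t.length + 1) + qcost t := by
  obtain ⟨b, t, rfl⟩ := List.exists_cons_of_ne_nil ht
  have hleft : (b :: t).filter (· < a) = b :: t :=
    List.filter_eq_self.mpr fun x hx => by simpa using hlt x hx
  have hright : (b :: t).filter (· > a) = [] :=
    List.filter_eq_nil_iff.mpr fun x hx => by simpa using (hlt x hx).le
  rw [qcost_cons_cons, hleft, hright, qcost_of_length_le_one (l := []) (by simp)]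
  simp

-- Stated without `/` and `-`, which truncate on `ℕ`, so that the induction step is ring arithmetic.
theorem two_mul_qcost_add_two_of_pairwise_gt {l : List ℤ} (hne : l ≠ [])
    (hs : l.Pairwise (· > ·)) : 2 * qcost l + 2 = l.length * (l.length + 1) := by
  induction l with
  | nil => exact absurd rfl hne
  | cons a t ih =>
    obtain ⟨hlt, hs⟩ := List.pairwise_cons.mp hs
    rcases eq_or_ne t [] with rfl | ht
    · simp [qcost_of_length_le_one]
    · rw [qcost_cons_of_forall_lt ht hlt, List.length_cons]
      linear_combination ih ht hs

/-- A strictly decreasing input of length `n` is a worst case for simple QuickSort: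
its cost is `n*(n+1)/2 - 1`. -/
theorem qcost_of_sorted_gt (l : List ℤ) (n : ℕ)
    (hne : l ≠ []) (hs : l.Pairwise (· > ·)) (hl : l.length = n) :
    qcost l = n * (n + 1) / 2 - 1 := by
  have key := two_mul_qcost_add_two_of_pairwise_gt hne hs
  rw [hl] at key
  omega
end

section
/- For every list l : List ℤ of length n with n ≥ 1, qcost l ≤ n*(n+1)/2 - 1. -/
lemma filt_len (t : List ℤ) (h : ℤ) :
    (t.filter (· < h)).length + (t.filter (· > h)).length ≤ t.length := by
  simp only [gt_iff_lt]
  induction t with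
  | nil => simp
  | cons x xs ih =>
    by_cases h1 : x < h <;> by_cases h2 : x > h <;>
      simp [List.filter_cons, h1, h2] <;> omega

lemma qcost_key : ∀ n : ℕ, ∀ l : List ℤ, l.length = n →
    2 * qcost l + 2 * min l.length 1 ≤ l.length * (l.length + 1) := by
  intro n
  induction n using Nat.strong_induction_on with
  | _ n ih =>
    intro l hl
    rw [qcost]
    split
    · rename_i h
      interval_cases hlen : l.length <;> simp
    · rename_i h
      push_neg at h
      have hsum := filt_len l.tail l.head!
      rw [List.length_tail] at hsum
      set a := (l.tail.filter (· < l.head!)) with ha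
      set b := (l.tail.filter (· > l.head!)) with hb
      have hia := ih a.length (by omega) a rfl
      have hib := ih b.length (by omega) b rfl
      have h1 : min a.length 1 ≤ 1 := min_le_right _ _
      have h2 : min b.length 1 ≤ 1 := min_le_right _ _
      by_cases hab : a.length = 0 ∧ b.length = 0
      · obtain ⟨ha0, hb0⟩ := hab
        have ha' : qcost a = 0 := by rw [qcost]; simp [ha0]
        have hb' : qcost b = 0 := by rw [qcost]; simp [hb0]
        rw [ha', hb']
        have : min l.length 1 = 1 := by omega
        rw [this]
        nlinarith [hl, h]
      · have hmin : 1 ≤ min a.length 1 + min b.length 1 := by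
          rcases Nat.eq_zero_or_pos a.length with h0 | h0
          · have : 1 ≤ b.length := by
              rcases Nat.eq_zero_or_pos b.length with h0' | h0'
              · exact absurd ⟨h0, h0'⟩ hab
              · omega
            omega
          · omega
        have hsq : a.length * (a.length + 1) + b.length * (b.length + 1) ≤
            (a.length + b.length) * (a.length + b.length + 1) := by nlinarith
        have hle : a.length + b.length ≤ l.length - 1 := hsum
        have hl2 : 2 ≤ l.length := h
        have : min l.length 1 = 1 := by omega
        rw [this]
        nlinarith [Nat.sub_add_cancel (le_of_lt (by omega : 1 < l.length))]

/-- Upper bound for the worst-case analysis of simple QuickSort: every input of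
length `n ≥ 1` has cost at most `n*(n+1)/2 - 1`. -/
theorem qcost_le (l : List ℤ) (n : ℕ) (hl : l.length = n) (hn : 1 ≤ n) :
    qcost l ≤ n * (n + 1) / 2 - 1 := by
  have key := qcost_key l.length l rfl
  rw [hl] at key
  have hmin : min n 1 = 1 := by omega
  rw [hmin] at key
  have h2 : qcost l + 1 ≤ n * (n + 1) / 2 := by
    rw [Nat.le_div_iff_mul_le (by norm_num)]
    omega
  omega
end
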